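/- arXiv:1707.06204 — 4 statements merged into one kernel-verified Lean document; each statement's English description precedes it below -/
import Mathlib

section
/- Let T_n be the characteristic time, i.e., the unique solution of Σ_{i=1}^n Ĝ_i(T_n) = C_n with 0 < C_n < n. Then for any n₂ ≤ C_n, T_n ≥ (C_n - n₂) / (Λ_n · P̄_n(n₂)), where Λ_n = Σᵢ λ_i and P̄_n(n₂) = Σ_{k > n₂} λ_{σ_k}/Λ_n is the aggregate popularity of the n - n₂ least popular contents (σ orders p_i = λ_i/Λ_n decreasingly). -/
open MeasureTheory Set Finset

/-! Each `Ĝᵢ(T)` is at most `1` (the truncated mean is at most the mean `1/λᵢ`) and at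
most `λᵢ T` (the integrand `1 - Gᵢ` is at most `1`). Using the first bound on the `n₂` most
popular contents and the second on the others gives `C ≤ n₂ + T · Λ P̄(n₂)`. -/

theorem intervalIntegral_le_setIntegral_Ioi {f : ℝ → ℝ} {a b : ℝ} (hab : a ≤ b)
    (hf : IntegrableOn f (Ioi a)) (hf0 : ∀ x, 0 ≤ f x) :
    ∫ x in a..b, f x ≤ ∫ x in Ioi a, f x := by
  rw [intervalIntegral.integral_of_le hab]
  exact setIntegral_mono_set hf (.of_forall hf0) (.of_forall Ioc_subset_Ioi_self)

theorem intervalIntegral_le_of_abs_le {f : ℝ → ℝ} {a b c : ℝ} (hab : a ≤ b)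
    (hf : ∀ x, |f x| ≤ c) : ∫ x in a..b, f x ≤ c * (b - a) := by
  have h := intervalIntegral.norm_integral_le_of_norm_le_const (a := a) (b := b)
    (fun x _ => (Real.norm_eq_abs (f x)).trans_le (hf x))
  rw [abs_of_nonneg (sub_nonneg.2 hab)] at h
  exact (le_abs_self _).trans h

theorem Fin.card_filter_not_le_val_le (n m : ℕ) :
    (univ.filter fun k : Fin n => ¬ m ≤ (k : ℕ)).card ≤ m := by
  simpa using card_le_card_of_injOn (t := range m) (fun k : Fin n => (k : ℕ))
    (fun k hk => by simpa using hk) (fun _ _ _ _ h => Fin.ext h)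

theorem Fin.sum_le_add_sum_filter_le {R : Type*} [Semiring R] [PartialOrder R] [IsOrderedRing R]
    {n : ℕ} {a b : Fin n → R} (m : ℕ)
    (ha : ∀ k, a k ≤ 1) (hab : ∀ k, a k ≤ b k) :
    ∑ k, a k ≤ m + ∑ k ∈ univ.filter (fun k : Fin n => m ≤ (k : ℕ)), b k := by
  rw [← sum_filter_not_add_sum_filter _ (fun k : Fin n => m ≤ (k : ℕ))]
  gcongr with k
  · calc ∑ k ∈ univ.filter (fun k : Fin n => ¬ m ≤ (k : ℕ)), a k
        ≤ (univ.filter fun k : Fin n => ¬ m ≤ (k : ℕ)).card • 1 :=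
          sum_le_card_nsmul _ _ _ fun k _ => ha k
      _ ≤ m := by
        rw [nsmul_one]
        exact Nat.mono_cast (Fin.card_filter_not_le_val_le n m)
  · exact hab k

theorem stmt_4_general (n : ℕ) (G : Fin n → ℝ → ℝ) (lam : Fin n → ℝ)
    (hlam : ∀ i, 0 < lam i)
    (hle : ∀ i t, G i t ≤ 1) (hge : ∀ i t, 0 ≤ G i t)
    (hInt : ∀ i, IntegrableOn (fun z => 1 - G i z) (Set.Ioi 0))
    (hmean : ∀ i, (∫ z in Set.Ioi (0:ℝ), (1 - G i z)) = 1 / lam i)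
    (Ghat : Fin n → ℝ → ℝ)
    (hGhat : ∀ i t, Ghat i t = lam i * ∫ z in (0:ℝ)..t, (1 - G i z))
    (σ : Equiv.Perm (Fin n))
    (Λ : ℝ) (hΛ : Λ = ∑ i, lam i)
    (Pbar : ℕ → ℝ)
    (hPbar : ∀ m : ℕ, Pbar m = ∑ k ∈ Finset.univ.filter (fun k : Fin n => m ≤ (k : ℕ)), lam (σ k) / Λ)
    (C T : ℝ) (hCn : C < n)
    (hT0 : 0 ≤ T) (hT : ∑ i, Ghat i T = C)
    (n₂ : ℕ) (hn₂ : (n₂ : ℝ) ≤ C) :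
    T ≥ (C - n₂) / (Λ * Pbar n₂) := by
  have hn₂n : n₂ < n := by exact_mod_cast hn₂.trans_lt hCn
  have hΛpos : 0 < Λ := hΛ ▸ sum_pos (fun i _ => hlam i) ⟨⟨n₂, hn₂n⟩, mem_univ _⟩
  have hΛP :
      Λ * Pbar n₂ = ∑ k ∈ univ.filter (fun k : Fin n => n₂ ≤ (k : ℕ)), lam (σ k) := by
    rw [hPbar, mul_sum]
    exact sum_congr rfl fun k _ => mul_div_cancel₀ _ hΛpos.ne'
  have hΛPpos : 0 < Λ * Pbar n₂ :=
    hΛP ▸ sum_pos (fun k _ => hlam (σ k)) ⟨⟨n₂, hn₂n⟩, by simp⟩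
  have hGhat_le_one (i : Fin n) : Ghat i T ≤ 1 :=
    calc Ghat i T ≤ lam i * (1 / lam i) := by
          rw [hGhat, ← hmean i]
          gcongr
          · exact (hlam i).le
          · exact intervalIntegral_le_setIntegral_Ioi hT0 (hInt i) fun z => by linarith [hle i z]
      _ = 1 := mul_one_div_cancel (hlam i).ne'
  have hGhat_le_mul (i : Fin n) : Ghat i T ≤ lam i * T := by
    rw [hGhat]
    have h := intervalIntegral_le_of_abs_le hT0 fun z =>
      abs_sub_le_of_nonneg_of_le zero_le_one le_rfl (hge i z) (hle i z)
    rw [one_mul, sub_zero] at h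
    exact mul_le_mul_of_nonneg_left h (hlam i).le
  have hC : C ≤ n₂ + Λ * Pbar n₂ * T := by
    rw [← hT, ← Equiv.sum_comp σ, hΛP, sum_mul]
    exact Fin.sum_le_add_sum_filter_le n₂ (fun _ => hGhat_le_one _) (fun _ => hGhat_le_mul _)
  rw [ge_iff_le, div_le_iff₀ hΛPpos]
  linarith

/-- Lower bound on the characteristic time: if `Σᵢ Ĝᵢ(T) = C` with `0 < C < n`,
then for any `n₂ ≤ C`, `T ≥ (C - n₂) / (Λ · P̄(n₂))` where `Λ = Σᵢ λᵢ` and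
`P̄(n₂)` is the aggregate popularity of the `n - n₂` least popular contents. -/
theorem stmt_4 (n : ℕ) (G : Fin n → ℝ → ℝ) (lam : Fin n → ℝ)
    (hlam : ∀ i, 0 < lam i)
    (hCont : ∀ i, Continuous (G i))
    (hMono : ∀ i, Monotone (G i))
    (hle : ∀ i t, G i t ≤ 1) (hge : ∀ i t, 0 ≤ G i t)
    (hsupp : ∀ i, ∀ t ≤ 0, G i t = 0)
    (hInt : ∀ i, IntegrableOn (fun z => 1 - G i z) (Set.Ioi 0))
    (hmean : ∀ i, (∫ z in Set.Ioi (0:ℝ), (1 - G i z)) = 1 / lam i)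
    (Ghat : Fin n → ℝ → ℝ)
    (hGhat : ∀ i t, Ghat i t = lam i * ∫ z in (0:ℝ)..t, (1 - G i z))
    (σ : Equiv.Perm (Fin n))
    (hσ : ∀ j k : Fin n, j ≤ k → lam (σ k) ≤ lam (σ j))
    (Λ : ℝ) (hΛ : Λ = ∑ i, lam i)
    (Pbar : ℕ → ℝ)
    (hPbar : ∀ m : ℕ, Pbar m = ∑ k ∈ Finset.univ.filter (fun k : Fin n => m ≤ (k : ℕ)), lam (σ k) / Λ)
    (C T : ℝ) (hC0 : 0 < C) (hCn : C < n)
    (hT0 : 0 ≤ T) (hT : ∑ i, Ghat i T = C)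
    (n₂ : ℕ) (hn₂ : (n₂ : ℝ) ≤ C) :
    T ≥ (C - n₂) / (Λ * Pbar n₂) :=
  stmt_4_general n G lam hlam hle hge hInt hmean Ghat hGhat σ Λ hΛ Pbar hPbar C T hCn hT0 hT n₂ hn₂
end

section
/- Assume additionally that there is a continuous cdf Ψ supported on [0,∞) with mean m_Ψ > 0 such that Ĝ_i(t) ≥ m_Ψ Ψ̂(λ_i t) for all i and t, where Ψ̂(t) = (1/m_Ψ)∫₀ᵗ (1-Ψ(z))dz. Then for any n₁ with C_n/m_Ψ < n₁ ≤ n and any ν₀ with Ψ̂(ν₀) ≥ C_n/(n₁ m_Ψ), the characteristic time satisfies T_n ≤ ν₀/λ_{σ_{n₁}}. -/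
/-!
Suppose `ν := ν₀ / λ_{σ(n₁)} < T`. The `n₁` items with the largest rates all have
`λ_{σ j} ν ≥ ν₀`, so `Ĝ_{σ j}(ν) ≥ m_Ψ Ψ̂(ν₀) ≥ C / n₁`, and hence `∑ᵢ Ĝᵢ(ν) ≥ C = ∑ᵢ Ĝᵢ(T)`.
As every `Ĝᵢ` is nondecreasing, `Ĝᵢ(ν) = Ĝᵢ(T)` for all `i`. But `Ĝᵢ` can only be constant on
`[ν, T]` once it has reached its limit `1`, so `C = ∑ᵢ Ĝᵢ(T) = n`, a contradiction.
-/

open MeasureTheory Set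

section Primitive

variable {f : ℝ → ℝ} {a : ℝ}

theorem Antitone.monotone_intervalIntegral_of_nonneg (hf : Antitone f) (h0 : 0 ≤ f) (c : ℝ) :
    Monotone fun t => ∫ z in c..t, f z := by
  intro a b hab
  have hsplit : (∫ z in c..b, f z) - ∫ z in c..a, f z = ∫ z in a..b, f z :=
    intervalIntegral.integral_interval_sub_left hf.intervalIntegrable hf.intervalIntegrable
  have hnonneg : 0 ≤ ∫ z in a..b, f z := intervalIntegral.integral_nonneg hab fun x _ => h0 x
  dsimp only
  linarith

theorem Antitone.eq_zero_of_intervalIntegral_eq_zero (hf : Antitone f) (h0 : 0 ≤ f)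
    {a b : ℝ} (hab : a < b) (h : ∫ z in a..b, f z = 0) : f b = 0 := by
  by_contra hb
  have hpos : 0 < f b := (h0 b).lt_of_ne' hb
  have := intervalIntegral.intervalIntegral_pos_of_pos_on hf.intervalIntegrable
    (fun x hx => hpos.trans_le (hf hx.2.le)) hab
  linarith

theorem Antitone.integral_Ioi_eq_intervalIntegral_of_eq_zero (hf : Antitone f) (h0 : 0 ≤ f)
    (hint : IntegrableOn f (Ioi a)) {b : ℝ} (hab : a ≤ b) (hfb : f b = 0) :
    ∫ z in Ioi a, f z = ∫ z in a..b, f z := by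
  have htail : ∫ z in Ioi b, f z = 0 :=
    setIntegral_eq_zero_of_forall_eq_zero fun z hz =>
      le_antisymm (hfb ▸ hf (le_of_lt hz)) (h0 z)
  rw [← intervalIntegral.integral_Ioi_sub_Ioi hint hab, htail, sub_zero]

theorem Antitone.intervalIntegral_eq_integral_Ioi_of_eq (hf : Antitone f) (h0 : 0 ≤ f)
    (hint : IntegrableOn f (Ioi a)) {s t : ℝ} (has : a ≤ s) (hst : s < t)
    (h : ∫ z in a..s, f z = ∫ z in a..t, f z) :
    ∫ z in a..t, f z = ∫ z in Ioi a, f z := by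
  have hstall : ∫ z in s..t, f z = 0 := by
    rw [← intervalIntegral.integral_interval_sub_left hf.intervalIntegrable
      hf.intervalIntegrable, h, sub_self]
  exact (hf.integral_Ioi_eq_intervalIntegral_of_eq_zero h0 hint (has.trans hst.le)
    (hf.eq_zero_of_intervalIntegral_eq_zero h0 hst hstall)).symm

end Primitive

section Equilibrium

/-- For a cdf `G` on `[0, ∞)` with mean `1 / lam`, the cdf of its equilibrium distribution. -/
noncomputable def equilibriumCdf (G : ℝ → ℝ) (lam t : ℝ) : ℝ :=
  lam * ∫ z in (0:ℝ)..t, (1 - G z)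

variable {G : ℝ → ℝ} {lam : ℝ}

theorem Monotone.antitone_one_sub (hMono : Monotone G) : Antitone fun z => 1 - G z :=
  fun _ _ hab => sub_le_sub_left (hMono hab) 1

@[simp]
theorem equilibriumCdf_zero : equilibriumCdf G lam 0 = 0 := by
  simp [equilibriumCdf]

theorem monotone_equilibriumCdf (hMono : Monotone G) (hle : ∀ t, G t ≤ 1) (hlam : 0 ≤ lam) :
    Monotone (equilibriumCdf G lam) := fun _ _ hab =>
  mul_le_mul_of_nonneg_left
    (hMono.antitone_one_sub.monotone_intervalIntegral_of_nonneg
      (fun z => sub_nonneg.mpr (hle z)) 0 hab) hlam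

theorem equilibriumCdf_nonneg (hMono : Monotone G) (hle : ∀ t, G t ≤ 1) (hlam : 0 ≤ lam)
    {t : ℝ} (ht : 0 ≤ t) : 0 ≤ equilibriumCdf G lam t :=
  equilibriumCdf_zero (G := G) (lam := lam) ▸ monotone_equilibriumCdf hMono hle hlam ht

theorem equilibriumCdf_eq_one_of_eq (hMono : Monotone G) (hle : ∀ t, G t ≤ 1) (hlam : 0 < lam)
    (hInt : IntegrableOn (fun z => 1 - G z) (Ioi 0))
    (hmean : ∫ z in Ioi (0:ℝ), (1 - G z) = 1 / lam) {s t : ℝ} (hs : 0 ≤ s) (hst : s < t)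
    (h : equilibriumCdf G lam s = equilibriumCdf G lam t) :
    equilibriumCdf G lam t = 1 := by
  rw [equilibriumCdf, hMono.antitone_one_sub.intervalIntegral_eq_integral_Ioi_of_eq
      (fun z => sub_nonneg.mpr (hle z)) hInt hs hst (mul_left_cancel₀ hlam.ne' h),
    hmean, mul_one_div_cancel hlam.ne']

end Equilibrium

theorem succ_mul_le_sum_of_le_comp_perm {n : ℕ} {g : Fin n → ℝ} (hg : 0 ≤ g)
    (σ : Equiv.Perm (Fin n)) (k : Fin n) {c : ℝ} (hc : ∀ j ≤ k, c ≤ g (σ j)) :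
    ((k : ℕ) + 1) * c ≤ ∑ i, g i := by
  rw [← Equiv.sum_comp σ]
  calc ((k : ℕ) + 1) * c = (Finset.Iic k).card • c := by simp [nsmul_eq_mul]
    _ ≤ ∑ j ∈ Finset.Iic k, g (σ j) :=
      Finset.card_nsmul_le_sum _ _ _ fun j hj => hc j (Finset.mem_Iic.mp hj)
    _ ≤ ∑ j, g (σ j) :=
      Finset.sum_le_sum_of_subset_of_nonneg (Finset.subset_univ _) fun j _ _ => hg (σ j)

theorem stmt_5_general (n : ℕ) (G : Fin n → ℝ → ℝ) (lam : Fin n → ℝ)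
    (hlam : ∀ i, 0 < lam i)
    (hMono : ∀ i, Monotone (G i))
    (hle : ∀ i t, G i t ≤ 1)
    (hInt : ∀ i, IntegrableOn (fun z => 1 - G i z) (Set.Ioi 0))
    (hmean : ∀ i, (∫ z in Set.Ioi (0:ℝ), (1 - G i z)) = 1 / lam i)
    (Ghat : Fin n → ℝ → ℝ)
    (hGhat : ∀ i t, Ghat i t = lam i * ∫ z in (0:ℝ)..t, (1 - G i z))
    (σ : Equiv.Perm (Fin n))
    (hσ : ∀ j k : Fin n, j ≤ k → lam (σ k) ≤ lam (σ j))
    -- the comparison cdf Ψ and its equilibrium distribution Ψ̂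
    (Ψ : ℝ → ℝ) (mΨ : ℝ)
    (hΨMono : Monotone Ψ)
    (hΨle : ∀ t, Ψ t ≤ 1)
    (hmΨ_pos : 0 < mΨ)
    (Ψhat : ℝ → ℝ)
    (hΨhat : ∀ t, Ψhat t = (1 / mΨ) * ∫ z in (0:ℝ)..t, (1 - Ψ z))
    (hbound : ∀ i t, 0 ≤ t → mΨ * Ψhat (lam i * t) ≤ Ghat i t)
    -- characteristic time
    (C T : ℝ) (hC0 : 0 < C) (hCn : C < n)
    (hT : ∑ i, Ghat i T = C)
    -- the index n₁ (1-indexed position (n₁ : ℕ) + 1) and ν₀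
    (n₁ : Fin n)
    (ν₀ : ℝ) (hν₀ : Ψhat ν₀ ≥ C / (((n₁ : ℕ) + 1) * mΨ)) :
    T ≤ ν₀ / lam (σ n₁) := by
  obtain rfl : Ghat = fun i => equilibriumCdf (G i) (lam i) := funext fun i => funext (hGhat i)
  obtain rfl : Ψhat = equilibriumCdf Ψ (1 / mΨ) := funext hΨhat
  have hΨhatMono := monotone_equilibriumCdf hΨMono hΨle (one_div_pos.mpr hmΨ_pos).le
  by_contra! hlt
  set ν := ν₀ / lam (σ n₁)
  have hν₀_pos : 0 < ν₀ := by
    by_contra! h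
    have hΨhatν₀ := equilibriumCdf_zero (G := Ψ) (lam := 1 / mΨ) ▸ hΨhatMono h
    have : 0 < C / (((n₁ : ℕ) + 1) * mΨ) := by positivity
    linarith
  have hν : 0 ≤ ν := div_nonneg hν₀_pos.le (hlam _).le
  have hlarge : ∀ j ≤ n₁,
      mΨ * equilibriumCdf Ψ (1 / mΨ) ν₀ ≤ equilibriumCdf (G (σ j)) (lam (σ j)) ν := fun j hj => by
    have hreach : ν₀ ≤ lam (σ j) * ν := by
      calc ν₀ = lam (σ n₁) * ν := (mul_div_cancel₀ ν₀ (hlam (σ n₁)).ne').symm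
        _ ≤ lam (σ j) * ν := mul_le_mul_of_nonneg_right (hσ j n₁ hj) hν
    exact (mul_le_mul_of_nonneg_left (hΨhatMono hreach) hmΨ_pos.le).trans (hbound _ _ hν)
  have hsum : C ≤ ∑ i, equilibriumCdf (G i) (lam i) ν := by
    rw [ge_iff_le, div_le_iff₀ (by positivity)] at hν₀
    exact le_trans (by linarith) (succ_mul_le_sum_of_le_comp_perm
      (fun i => equilibriumCdf_nonneg (hMono i) (hle i) (hlam i).le hν) σ n₁ hlarge)
  have hmono : ∀ i ∈ Finset.univ,
      equilibriumCdf (G i) (lam i) ν ≤ equilibriumCdf (G i) (lam i) T := fun i _ =>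
    monotone_equilibriumCdf (hMono i) (hle i) (hlam i).le hlt.le
  have hstall := (Finset.sum_eq_sum_iff_of_le hmono).mp
    ((Finset.sum_le_sum hmono).antisymm (hT ▸ hsum))
  have hfull : ∀ i, equilibriumCdf (G i) (lam i) T = 1 := fun i =>
    equilibriumCdf_eq_one_of_eq (hMono i) (hle i) (hlam i) (hInt i) (hmean i) hν hlt
      (hstall i (Finset.mem_univ i))
  simp only [hfull, Finset.sum_const, Finset.card_univ, Fintype.card_fin, nsmul_eq_mul,
    mul_one] at hT
  linarith

/-- Upper bound on the characteristic time: under the lower bound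
`Ĝᵢ(t) ≥ m_Ψ Ψ̂(λᵢ t)`, for any `n₁` with `C/m_Ψ < n₁ ≤ n` and any `ν₀` with
`Ψ̂(ν₀) ≥ C/(n₁ m_Ψ)`, one has `T ≤ ν₀ / λ_{σ(n₁)}`. -/
theorem stmt_5 (n : ℕ) (G : Fin n → ℝ → ℝ) (lam : Fin n → ℝ)
    (hlam : ∀ i, 0 < lam i)
    (hCont : ∀ i, Continuous (G i))
    (hMono : ∀ i, Monotone (G i))
    (hle : ∀ i t, G i t ≤ 1) (hge : ∀ i t, 0 ≤ G i t)
    (hsupp : ∀ i, ∀ t ≤ 0, G i t = 0)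
    (hInt : ∀ i, IntegrableOn (fun z => 1 - G i z) (Set.Ioi 0))
    (hmean : ∀ i, (∫ z in Set.Ioi (0:ℝ), (1 - G i z)) = 1 / lam i)
    (Ghat : Fin n → ℝ → ℝ)
    (hGhat : ∀ i t, Ghat i t = lam i * ∫ z in (0:ℝ)..t, (1 - G i z))
    (σ : Equiv.Perm (Fin n))
    (hσ : ∀ j k : Fin n, j ≤ k → lam (σ k) ≤ lam (σ j))
    -- the comparison cdf Ψ and its equilibrium distribution Ψ̂
    (Ψ : ℝ → ℝ) (mΨ : ℝ)
    (hΨCont : Continuous Ψ) (hΨMono : Monotone Ψ)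
    (hΨle : ∀ t, Ψ t ≤ 1) (hΨge : ∀ t, 0 ≤ Ψ t)
    (hΨsupp : ∀ t ≤ 0, Ψ t = 0)
    (hΨInt : IntegrableOn (fun z => 1 - Ψ z) (Set.Ioi 0))
    (hmΨ : mΨ = ∫ z in Set.Ioi (0:ℝ), (1 - Ψ z)) (hmΨ_pos : 0 < mΨ)
    (Ψhat : ℝ → ℝ)
    (hΨhat : ∀ t, Ψhat t = (1 / mΨ) * ∫ z in (0:ℝ)..t, (1 - Ψ z))
    (hbound : ∀ i t, 0 ≤ t → mΨ * Ψhat (lam i * t) ≤ Ghat i t)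
    -- characteristic time
    (C T : ℝ) (hC0 : 0 < C) (hCn : C < n)
    (hT0 : 0 ≤ T) (hT : ∑ i, Ghat i T = C)
    -- the index n₁ (1-indexed position (n₁ : ℕ) + 1) and ν₀
    (n₁ : Fin n) (hn₁ : C / mΨ < (n₁ : ℕ) + 1)
    (ν₀ : ℝ) (hν₀ : Ψhat ν₀ ≥ C / (((n₁ : ℕ) + 1) * mΨ)) :
    T ≤ ν₀ / lam (σ n₁) :=
  stmt_5_general n G lam hlam hMono hle hInt hmean Ghat hGhat σ hσ Ψ mΨ hΨMono hΨle hmΨ_pos Ψhat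
    hΨhat hbound C T hC0 hCn hT n₁ ν₀ hν₀
end

section
/- Under the assumptions of the previous statement, for each β₀ ∈ (0,1) there is a unique ν₀ ∈ (0,∞) with ∫₀¹ Ψ̂(ν₀ f(x)) dx = β₀. -/
/-!
The equilibrium distribution `Ψ̂(t) = m⁻¹ ∫₀ᵗ (1 - Ψ)` is a continuous distribution function on
`[0, ∞)` which is strictly increasing as long as it is below `1`: if `Ψ̂` is constant on `[s, t]`,
then `1 - Ψ` vanishes somewhere in `(s, t)`, hence on all of `[t, ∞)` by monotonicity of `Ψ`, so
`Ψ̂(t) = 1`. By dominated convergence, `β(ν) = ∫ Ψ̂(ν f)` is continuous on `[0, ∞)` with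
`β(0) = 0`, and `β(ν) → 1` since `f > 0` a.e., which gives existence by the intermediate value
theorem. If `β(ν₁) = β(ν₂)` with `ν₁ < ν₂`, then `Ψ̂(ν₁ f) = Ψ̂(ν₂ f)` a.e., so
`Ψ̂(ν₂ f) = 1` a.e. and `β(ν₂) = 1`; this gives uniqueness below `1`.
-/

open MeasureTheory Filter Set Topology

noncomputable def equilibriumCDF (Ψ : ℝ → ℝ) (t : ℝ) : ℝ :=
  (∫ z in Ioi (0 : ℝ), (1 - Ψ z))⁻¹ * ∫ z in (0 : ℝ)..t, (1 - Ψ z)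

section EquilibriumCDF

variable {Ψ : ℝ → ℝ} {s t c : ℝ}

@[simp]
theorem equilibriumCDF_zero : equilibriumCDF Ψ 0 = 0 := by
  simp [equilibriumCDF]

theorem continuous_equilibriumCDF (hc : Continuous Ψ) : Continuous (equilibriumCDF Ψ) :=
  continuous_const.mul <| intervalIntegral.continuous_primitive
    (fun a b => (continuous_const.sub hc).intervalIntegrable a b) 0

theorem monotone_equilibriumCDF (hc : Continuous Ψ) (hle : ∀ z, Ψ z ≤ 1) :
    Monotone (equilibriumCDF Ψ) := by
  intro s t hst
  have hg : ∀ a b : ℝ, IntervalIntegrable (fun z => 1 - Ψ z) volume a b :=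
    fun a b => (continuous_const.sub hc).intervalIntegrable a b
  refine mul_le_mul_of_nonneg_left ?_ <| inv_nonneg.2 <|
    setIntegral_nonneg measurableSet_Ioi fun z _ => sub_nonneg.2 (hle z)
  rw [← intervalIntegral.integral_add_adjacent_intervals (hg 0 s) (hg s t)]
  exact le_add_of_nonneg_right <|
    intervalIntegral.integral_nonneg hst fun z _ => sub_nonneg.2 (hle z)

theorem tendsto_equilibriumCDF_atTop (hint : IntegrableOn (fun z => 1 - Ψ z) (Ioi 0))
    (hm : ∫ z in Ioi (0 : ℝ), (1 - Ψ z) ≠ 0) :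
    Tendsto (equilibriumCDF Ψ) atTop (𝓝 1) := by
  have := (intervalIntegral_tendsto_integral_Ioi 0 hint tendsto_id).const_mul
    (∫ z in Ioi (0 : ℝ), (1 - Ψ z))⁻¹
  rwa [inv_mul_cancel₀ hm] at this

theorem exists_eq_one_of_intervalIntegral_eq_zero (hc : Continuous Ψ) (hle : ∀ z, Ψ z ≤ 1)
    (hst : s < t) (hzero : ∫ z in s..t, (1 - Ψ z) = 0) : ∃ c ∈ Ioo s t, Ψ c = 1 := by
  by_contra! hne
  have hpos := intervalIntegral.intervalIntegral_pos_of_pos_on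
    ((continuous_const.sub hc).intervalIntegrable s t)
    (fun z hz => sub_pos.2 ((hle z).lt_of_ne (hne z hz))) hst
  exact hpos.ne' hzero

theorem setIntegral_Ioi_one_sub_eq_zero (hmono : Monotone Ψ) (hle : ∀ z, Ψ z ≤ 1)
    (hΨc : Ψ c = 1) (hct : c ≤ t) : ∫ z in Ioi t, (1 - Ψ z) = 0 :=
  setIntegral_eq_zero_of_forall_eq_zero fun z hz => by
    linarith [hle z, hΨc ▸ hmono (hct.trans (le_of_lt hz))]

theorem equilibriumCDF_eq_one_of_eq (hc : Continuous Ψ) (hmono : Monotone Ψ)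
    (hle : ∀ z, Ψ z ≤ 1) (hint : IntegrableOn (fun z => 1 - Ψ z) (Ioi 0))
    (hm : ∫ z in Ioi (0 : ℝ), (1 - Ψ z) ≠ 0) (hs : 0 ≤ s) (hst : s < t)
    (heq : equilibriumCDF Ψ s = equilibriumCDF Ψ t) : equilibriumCDF Ψ t = 1 := by
  have hg : ∀ a b : ℝ, IntervalIntegrable (fun z => 1 - Ψ z) volume a b :=
    fun a b => (continuous_const.sub hc).intervalIntegrable a b
  have hzero : ∫ z in s..t, (1 - Ψ z) = 0 := by
    rw [← intervalIntegral.integral_interval_sub_left (hg 0 t) (hg 0 s),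
      mul_left_cancel₀ (inv_ne_zero hm) heq, sub_self]
  obtain ⟨c, hcst, hΨc⟩ := exists_eq_one_of_intervalIntegral_eq_zero hc hle hst hzero
  rw [equilibriumCDF, ← intervalIntegral.integral_Ioi_sub_Ioi hint (hs.trans hst.le),
    setIntegral_Ioi_one_sub_eq_zero hmono hle hΨc hcst.2.le, sub_zero, inv_mul_cancel₀ hm]

end EquilibriumCDF

section IntegralCompMul

variable {α : Type*} [MeasurableSpace α] {μ : Measure α} {φ : ℝ → ℝ} {f : α → ℝ} {ν : ℝ}

theorem norm_le_one_of_monotone_of_tendsto (hm : Monotone φ) (h0 : φ 0 = 0)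
    (h1 : Tendsto φ atTop (𝓝 1)) {t : ℝ} (ht : 0 ≤ t) : ‖φ t‖ ≤ 1 := by
  rw [Real.norm_eq_abs, abs_le]
  exact ⟨by linarith [h0 ▸ hm ht], hm.ge_of_tendsto h1 t⟩

theorem integrable_comp_mul [IsFiniteMeasure μ] (hc : Continuous φ) (hm : Monotone φ)
    (h0 : φ 0 = 0) (h1 : Tendsto φ atTop (𝓝 1)) (hf : AEMeasurable f μ)
    (hf0 : ∀ᵐ x ∂μ, 0 ≤ f x) (hν : 0 ≤ ν) : Integrable (fun x => φ (ν * f x)) μ :=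
  (integrable_const 1).mono' (hc.measurable.comp_aemeasurable (hf.const_mul ν)).aestronglyMeasurable
    (hf0.mono fun _ hx => norm_le_one_of_monotone_of_tendsto hm h0 h1 (mul_nonneg hν hx))

theorem continuousOn_integral_comp_mul [IsFiniteMeasure μ] (hc : Continuous φ) (hm : Monotone φ)
    (h0 : φ 0 = 0) (h1 : Tendsto φ atTop (𝓝 1)) (hf : AEMeasurable f μ)
    (hf0 : ∀ᵐ x ∂μ, 0 ≤ f x) : ContinuousOn (fun ν => ∫ x, φ (ν * f x) ∂μ) (Ici 0) :=
  continuousOn_of_dominated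
    (fun _ hν => (integrable_comp_mul hc hm h0 h1 hf hf0 hν).aestronglyMeasurable)
    (fun _ hν => hf0.mono fun _ hx =>
      norm_le_one_of_monotone_of_tendsto hm h0 h1 (mul_nonneg hν hx))
    (integrable_const 1)
    (ae_of_all _ fun x => (hc.comp (continuous_mul_const (f x))).continuousOn)

theorem tendsto_integral_comp_mul_atTop [IsFiniteMeasure μ] (hc : Continuous φ) (hm : Monotone φ)
    (h0 : φ 0 = 0) (h1 : Tendsto φ atTop (𝓝 1)) (hf : AEMeasurable f μ)
    (hfpos : ∀ᵐ x ∂μ, 0 < f x) :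
    Tendsto (fun ν => ∫ x, φ (ν * f x) ∂μ) atTop (𝓝 (μ.real univ)) := by
  have hf0 : ∀ᵐ x ∂μ, 0 ≤ f x := hfpos.mono fun _ hx => hx.le
  have := tendsto_integral_filter_of_dominated_convergence (fun _ => (1 : ℝ))
    (Eventually.of_forall fun ν =>
      (hc.measurable.comp_aemeasurable (hf.const_mul ν)).aestronglyMeasurable)
    ((eventually_ge_atTop 0).mono fun ν hν =>
      hf0.mono fun _ hx => norm_le_one_of_monotone_of_tendsto hm h0 h1 (mul_nonneg hν hx))
    (integrable_const 1)
    (hfpos.mono fun x hx => h1.comp (tendsto_id.atTop_mul_const hx))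
  simpa using this

theorem integral_comp_mul_eq_of_eq [IsFiniteMeasure μ] (hc : Continuous φ) (hm : Monotone φ)
    (h0 : φ 0 = 0) (h1 : Tendsto φ atTop (𝓝 1))
    (hφ : ∀ s t, 0 ≤ s → s < t → φ s = φ t → φ t = 1) (hf : AEMeasurable f μ)
    (hfpos : ∀ᵐ x ∂μ, 0 < f x) {ν₁ ν₂ : ℝ} (hν₁ : 0 ≤ ν₁) (h12 : ν₁ < ν₂)
    (heq : ∫ x, φ (ν₁ * f x) ∂μ = ∫ x, φ (ν₂ * f x) ∂μ) :
    ∫ x, φ (ν₂ * f x) ∂μ = μ.real univ := by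
  have hf0 : ∀ᵐ x ∂μ, 0 ≤ f x := hfpos.mono fun _ hx => hx.le
  have hi₁ := integrable_comp_mul hc hm h0 h1 hf hf0 hν₁
  have hi₂ := integrable_comp_mul hc hm h0 h1 hf hf0 (hν₁.trans h12.le)
  have hdiff : (fun x => φ (ν₂ * f x) - φ (ν₁ * f x)) =ᵐ[μ] 0 := by
    refine (integral_eq_zero_iff_of_nonneg_ae ?_ (hi₂.sub hi₁)).1 ?_
    · exact hf0.mono fun _ hx => sub_nonneg.2 (hm (mul_le_mul_of_nonneg_right h12.le hx))
    · simp only [Pi.sub_apply]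
      rw [integral_sub hi₂ hi₁, heq, sub_self]
  have hone : (fun x => φ (ν₂ * f x)) =ᵐ[μ] fun _ => 1 := by
    filter_upwards [hdiff, hfpos] with x hx hfx
    exact hφ _ _ (mul_nonneg hν₁ hfx.le) (mul_lt_mul_of_pos_right h12 hfx) (sub_eq_zero.1 hx).symm
  simp [integral_congr_ae hone]

theorem existsUnique_pos_integral_comp_mul_eq [IsProbabilityMeasure μ] (hc : Continuous φ)
    (hm : Monotone φ) (h0 : φ 0 = 0) (h1 : Tendsto φ atTop (𝓝 1))
    (hφ : ∀ s t, 0 ≤ s → s < t → φ s = φ t → φ t = 1) (hf : AEMeasurable f μ)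
    (hfpos : ∀ᵐ x ∂μ, 0 < f x) {y : ℝ} (hy : y ∈ Ioo 0 1) :
    ∃! ν, 0 < ν ∧ ∫ x, φ (ν * f x) ∂μ = y := by
  have hf0 : ∀ᵐ x ∂μ, 0 ≤ f x := hfpos.mono fun _ hx => hx.le
  have hF0 : ∫ x, φ (0 * f x) ∂μ = 0 := by simp [h0]
  have hFtop : Tendsto (fun ν => ∫ x, φ (ν * f x) ∂μ) atTop (𝓝 1) := by
    simpa using tendsto_integral_comp_mul_atTop hc hm h0 h1 hf hfpos
  obtain ⟨b, hb0, hyb⟩ := ((eventually_ge_atTop 0).and (hFtop.eventually (lt_mem_nhds hy.2))).exists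
  obtain ⟨ν, hν, hFν⟩ := intermediate_value_Icc hb0
    ((continuousOn_integral_comp_mul hc hm h0 h1 hf hf0).mono Icc_subset_Ici_self)
    ⟨hF0.trans_le hy.1.le, hyb.le⟩
  have hνpos : 0 < ν := hν.1.lt_of_ne <| by
    rintro rfl
    exact hy.1.ne' (hFν.symm.trans hF0)
  have hFeq_one : ∀ ν₁ ν₂, 0 < ν₁ → ν₁ < ν₂ →
      ∫ x, φ (ν₁ * f x) ∂μ = ∫ x, φ (ν₂ * f x) ∂μ → ∫ x, φ (ν₂ * f x) ∂μ = 1 :=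
    fun ν₁ ν₂ h₁ h12 heq => by
      simpa using integral_comp_mul_eq_of_eq hc hm h0 h1 hφ hf hfpos h₁.le h12 heq
  refine ⟨ν, ⟨hνpos, hFν⟩, fun ν' ⟨hν'pos, hFν'⟩ => ?_⟩
  rcases lt_trichotomy ν' ν with hlt | heq | hgt
  · exact absurd (hFν ▸ hFeq_one ν' ν hν'pos hlt (hFν'.trans hFν.symm)) hy.2.ne
  · exact heq
  · exact absurd (hFν' ▸ hFeq_one ν ν' hνpos hgt (hFν.trans hFν'.symm)) hy.2.ne

end IntegralCompMul

theorem stmt_12_general (Ψ : ℝ → ℝ) (mΨ : ℝ)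
    (hΨCont : Continuous Ψ) (hΨMono : Monotone Ψ)
    (hΨle : ∀ t, Ψ t ≤ 1)
    (hΨInt : IntegrableOn (fun z => 1 - Ψ z) (Set.Ioi 0))
    (hmΨ : mΨ = ∫ z in Set.Ioi (0:ℝ), (1 - Ψ z)) (hmΨ_pos : 0 < mΨ)
    (Ψhat : ℝ → ℝ)
    (hΨhat : ∀ t, Ψhat t = (1 / mΨ) * ∫ z in (0:ℝ)..t, (1 - Ψ z))
    (f : ℝ → ℝ) (hfMeas : Measurable f)
    (hfpos : ∀ᵐ x ∂(volume.restrict (Set.Ioc (0:ℝ) 1)), 0 < f x)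
    (β : ℝ → ℝ)
    (hβ : ∀ ν, β ν = ∫ x in Set.Ioc (0:ℝ) 1, Ψhat (ν * f x)) :
    ∀ β₀ ∈ Set.Ioo (0:ℝ) 1, ∃! ν : ℝ, 0 < ν ∧ β ν = β₀ := by
  intro β₀ hβ₀
  subst hmΨ
  have hΨhat_eq : Ψhat = equilibriumCDF Ψ := funext fun t => by rw [hΨhat, one_div, equilibriumCDF]
  have : IsProbabilityMeasure (volume.restrict (Ioc (0 : ℝ) 1)) := ⟨by simp⟩
  simp only [hβ, hΨhat_eq]
  exact existsUnique_pos_integral_comp_mul_eq (continuous_equilibriumCDF hΨCont)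
    (monotone_equilibriumCDF hΨCont hΨle) equilibriumCDF_zero
    (tendsto_equilibriumCDF_atTop hΨInt hmΨ_pos.ne')
    (fun _ _ hs hst => equilibriumCDF_eq_one_of_eq hΨCont hΨMono hΨle hΨInt hmΨ_pos.ne' hs hst)
    hfMeas.aemeasurable hfpos hβ₀

/-- For each `β₀ ∈ (0,1)` there is a unique `ν₀ ∈ (0,∞)` with
`∫₀¹ Ψ̂(ν₀ f(x)) dx = β₀`. -/
theorem stmt_12 (Ψ : ℝ → ℝ) (mΨ : ℝ)
    (hΨCont : Continuous Ψ) (hΨMono : Monotone Ψ)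
    (hΨle : ∀ t, Ψ t ≤ 1) (hΨge : ∀ t, 0 ≤ Ψ t)
    (hΨsupp : ∀ t ≤ 0, Ψ t = 0)
    (hΨTop : Tendsto Ψ atTop (nhds 1))
    (hΨInt : IntegrableOn (fun z => 1 - Ψ z) (Set.Ioi 0))
    (hmΨ : mΨ = ∫ z in Set.Ioi (0:ℝ), (1 - Ψ z)) (hmΨ_pos : 0 < mΨ)
    (Ψhat : ℝ → ℝ)
    (hΨhat : ∀ t, Ψhat t = (1 / mΨ) * ∫ z in (0:ℝ)..t, (1 - Ψ z))
    (f : ℝ → ℝ) (hfMeas : Measurable f)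
    (hfCont : ContinuousOn f (Set.Ioc 0 1))
    (hfnonneg : ∀ x ∈ Set.Ioc (0:ℝ) 1, 0 ≤ f x)
    (hfpos : ∀ᵐ x ∂(volume.restrict (Set.Ioc (0:ℝ) 1)), 0 < f x)
    (β : ℝ → ℝ)
    (hβ : ∀ ν, β ν = ∫ x in Set.Ioc (0:ℝ) 1, Ψhat (ν * f x)) :
    ∀ β₀ ∈ Set.Ioo (0:ℝ) 1, ∃! ν : ℝ, 0 < ν ∧ β ν = β₀ :=
  stmt_12_general Ψ mΨ hΨCont hΨMono hΨle hΨInt hmΨ hmΨ_pos Ψhat hΨhat f hfMeas hfpos β hβ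
end

section
/- For the Zipf distribution p_{n,i} = i^{-α} / Σ_{j=1}^n j^{-α} with α ∈ [0,1), the tail P̄_n(i) = Σ_{k=i+1}^n p_{n,k} satisfies P̄_n(i) ~ (n^{1-α} - i^{1-α})/n^{1-α} as n → ∞ uniformly on sequences i = i(n) with i(n)/n bounded away from 1; in particular if i(n)/n → c ∈ [0,1) then P̄_n(i(n)) → 1 - c^{1-α}. -/
/-!
By concavity of `x ↦ x ^ (1 - α)`, its increment over `[k - 1, k]` is at least `(1 - α) k^{-α}`
and its increment over `[k, k + 1]` at most that; telescoping, `(1 - α) ∑_{m < k ≤ n} k^{-α}` lies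
within `1` of `n^{1-α} - m^{1-α}`. If `i(n) ≤ c n` with `c < 1`, then
`n^{1-α} - i(n)^{1-α} ≥ (1 - c^{1-α}) n^{1-α}` tends to infinity, so the bounded error is
negligible both for the tail sum and (with `m = 0`) for the normalising sum. Dividing the two
asymptotic equivalences gives the uniform statement, and `(i/n)^{1-α} → c^{1-α}` gives the limit.
-/

open Filter Finset Real Asymptotics Topology

lemma rpow_add_le_rpow_add_mul_rpow_sub_one {p x h : ℝ} (hp0 : 0 ≤ p) (hp1 : p ≤ 1)
    (hx : 0 < x) (hh : -x ≤ h) :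
    (x + h) ^ p ≤ x ^ p + p * x ^ (p - 1) * h := by
  have hs : -1 ≤ h / x := by rw [le_div_iff₀ hx]; linarith
  calc (x + h) ^ p = x ^ p * (1 + h / x) ^ p := by
        rw [← mul_rpow hx.le (by linarith)]; congr 1; field_simp
    _ ≤ x ^ p * (1 + p * (h / x)) := by
        gcongr; exact rpow_one_add_le_one_add_mul_self hs hp0 hp1
    _ = x ^ p + p * x ^ (p - 1) * h := by rw [rpow_sub_one hx.ne']; field_simp

section PartialSums

variable {α : ℝ} {m n : ℕ}

lemma mul_sum_Ioc_rpow_neg_le (hα0 : 0 ≤ α) (hα1 : α ≤ 1) (hmn : m ≤ n) :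
    (1 - α) * ∑ k ∈ Ioc m n, (k : ℝ) ^ (-α) ≤ (n : ℝ) ^ (1 - α) - (m : ℝ) ^ (1 - α) := by
  rw [← Finset.Ico_add_one_add_one_eq_Ioc, ← sum_Ico_add', mul_sum,
    ← sum_Ico_sub (fun k : ℕ => (k : ℝ) ^ (1 - α)) hmn]
  gcongr with j
  have := rpow_add_le_rpow_add_mul_rpow_sub_one (p := 1 - α) (x := (j : ℝ) + 1) (h := -1)
    (by linarith) (by linarith) (by positivity) (by linarith [j.cast_nonneg (α := ℝ)])
  rw [add_neg_cancel_right, sub_sub_cancel_left] at this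
  push_cast
  linarith

lemma rpow_sub_rpow_sub_one_le_mul_sum_Ioc (hα0 : 0 ≤ α) (hα1 : α ≤ 1) (hmn : m ≤ n) :
    (n : ℝ) ^ (1 - α) - (m : ℝ) ^ (1 - α) - 1 ≤ (1 - α) * ∑ k ∈ Ioc m n, (k : ℝ) ^ (-α) := by
  calc (n : ℝ) ^ (1 - α) - (m : ℝ) ^ (1 - α) - 1
      ≤ ((n : ℝ) + 1) ^ (1 - α) - ((m : ℝ) + 1) ^ (1 - α) := by
        have hm := rpow_add_le_add_rpow (p := 1 - α) m.cast_nonneg zero_le_one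
          (by linarith) (by linarith)
        have hn : (n : ℝ) ^ (1 - α) ≤ ((n : ℝ) + 1) ^ (1 - α) := by gcongr; linarith
        rw [one_rpow] at hm
        linarith
    _ = ∑ k ∈ Ioc m n, (((k : ℝ) + 1) ^ (1 - α) - (k : ℝ) ^ (1 - α)) := by
        rw [← Finset.Ico_add_one_add_one_eq_Ioc]
        exact_mod_cast (sum_Ico_sub (fun k : ℕ => (k : ℝ) ^ (1 - α)) (by omega)).symm
    _ ≤ (1 - α) * ∑ k ∈ Ioc m n, (k : ℝ) ^ (-α) := by
        rw [mul_sum]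
        gcongr with k hk
        have hk : (0 : ℝ) < k := by exact_mod_cast (Nat.zero_le m).trans_lt (mem_Ioc.1 hk).1
        have := rpow_add_le_rpow_add_mul_rpow_sub_one (p := 1 - α) (h := 1)
          (by linarith) (by linarith) hk (by linarith)
        rw [sub_sub_cancel_left] at this
        linarith

end PartialSums

lemma Asymptotics.isEquivalent_of_abs_sub_le {ι : Type*} {l : Filter ι} {u v : ι → ℝ} {C : ℝ}
    (hv : Tendsto v l atTop) (huv : ∀ᶠ x in l, |u x - v x| ≤ C) : u ~[l] v :=
  (IsBigO.of_bound C (by simpa using huv) : (u - v) =O[l] fun _ => (1 : ℝ)).trans_isLittleO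
    ((isLittleO_one_left_iff ℝ).2 (tendsto_abs_atTop_atTop.comp hv))

lemma tendsto_rpow_sub_rpow_atTop {ι : Type*} {l : Filter ι} {x y : ι → ℝ} {p c : ℝ}
    (hp : 0 < p) (hc : c < 1) (hx : Tendsto x l atTop) (hy0 : ∀ t, 0 ≤ y t)
    (hyx : ∀ᶠ t in l, y t ≤ c * x t) :
    Tendsto (fun t => x t ^ p - y t ^ p) l atTop := by
  set c' := max c 0
  have hδ : 0 < 1 - c' ^ p := sub_pos.2 (rpow_lt_one (le_max_right _ _) (max_lt hc one_pos) hp)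
  refine tendsto_atTop_mono' l ?_ (((tendsto_rpow_atTop hp).comp hx).const_mul_atTop hδ)
  filter_upwards [hyx, hx.eventually_ge_atTop 0] with t hyt hxt
  have : y t ^ p ≤ c' ^ p * x t ^ p := by
    rw [← mul_rpow (le_max_right _ _) hxt]
    gcongr
    exacts [hy0 t, hyt.trans (by gcongr; exact le_max_left _ _)]
  simp only [Function.comp_apply]
  linarith

lemma isEquivalent_mul_sum_Ioc_rpow_neg {α c : ℝ} (hα0 : 0 ≤ α) (hα1 : α < 1) (hc : c < 1)
    {i : ℕ → ℕ} (hin : ∀ n, i n ≤ n) (hic : ∀ᶠ n in atTop, (i n : ℝ) ≤ c * n) :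
    (fun n : ℕ => (1 - α) * ∑ k ∈ Ioc (i n) n, (k : ℝ) ^ (-α)) ~[atTop]
      fun n => (n : ℝ) ^ (1 - α) - (i n : ℝ) ^ (1 - α) := by
  refine isEquivalent_of_abs_sub_le (C := 1) (tendsto_rpow_sub_rpow_atTop (by linarith) hc
    tendsto_natCast_atTop_atTop (fun n => (i n).cast_nonneg) hic) (.of_forall fun n => ?_)
  have := mul_sum_Ioc_rpow_neg_le hα0 hα1.le (hin n)
  have := rpow_sub_rpow_sub_one_le_mul_sum_Ioc hα0 hα1.le (hin n)
  rw [abs_sub_le_iff]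
  constructor <;> linarith

lemma zipf_tail_isEquivalent {α c : ℝ} (hα0 : 0 ≤ α) (hα1 : α < 1) (hc : c < 1)
    {i : ℕ → ℕ} (hin : ∀ n, i n ≤ n) (hic : ∀ᶠ n in atTop, (i n : ℝ) ≤ c * n) :
    (fun n : ℕ => (∑ k ∈ Ioc (i n) n, (k : ℝ) ^ (-α)) / ∑ j ∈ Icc 1 n, (j : ℝ) ^ (-α)) ~[atTop]
      fun n => ((n : ℝ) ^ (1 - α) - (i n : ℝ) ^ (1 - α)) / (n : ℝ) ^ (1 - α) := by
  have hα : 1 - α ≠ 0 := by linarith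
  have hS := isEquivalent_mul_sum_Ioc_rpow_neg hα0 hα1 one_pos (i := fun _ => 0)
    (fun n => n.zero_le) (by simp)
  simp only [Nat.cast_zero, zero_rpow hα, sub_zero] at hS
  refine ((isEquivalent_mul_sum_Ioc_rpow_neg hα0 hα1 hc hin hic).div hS).congr_left
    (.of_forall fun n => ?_)
  simp only [Pi.div_apply, ← Finset.Icc_add_one_left_eq_Ioc, zero_add]
  exact mul_div_mul_left _ _ hα

lemma tendsto_rpow_sub_rpow_div_rpow {p c : ℝ} (hp : 0 ≤ p) {i : ℕ → ℕ}
    (hic : Tendsto (fun n => (i n : ℝ) / n) atTop (𝓝 c)) :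
    Tendsto (fun n : ℕ => ((n : ℝ) ^ p - (i n : ℝ) ^ p) / (n : ℝ) ^ p) atTop (𝓝 (1 - c ^ p)) := by
  refine (tendsto_const_nhds.sub
    ((continuousAt_rpow_const c p (.inr hp)).tendsto.comp hic)).congr' ?_
  filter_upwards [eventually_gt_atTop 0] with n hn
  have : (0 : ℝ) < (n : ℝ) ^ p := rpow_pos_of_pos (by exact_mod_cast hn) p
  rw [Function.comp_apply, div_rpow (i n).cast_nonneg n.cast_nonneg]
  field_simp

/-- Zipf tail asymptotics for `α ∈ [0,1)`:
`P̄_n(i) ~ (n^{1-α} - i^{1-α})/n^{1-α}` uniformly over sequences `i(n)` with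
`i(n)/n` bounded away from `1`; in particular if `i(n)/n → c ∈ [0,1)` then
`P̄_n(i(n)) → 1 - c^{1-α}`. -/
theorem stmt_14 (α : ℝ) (hα0 : 0 ≤ α) (hα1 : α < 1)
    (Pbar : ℕ → ℕ → ℝ)
    (hPbar : ∀ n m, Pbar n m =
      (∑ k ∈ Finset.Ioc m n, ((k : ℝ) ^ (-α))) /
        (∑ j ∈ Finset.Icc 1 n, ((j : ℝ) ^ (-α)))) :
    (∀ ε > (0:ℝ), ∀ i : ℕ → ℕ, (∀ n, i n ≤ n) →
      (∀ n, (i n : ℝ) ≤ (1 - ε) * n) →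
      Tendsto (fun n : ℕ =>
          Pbar n (i n) /
            (((n : ℝ) ^ (1 - α) - (i n : ℝ) ^ (1 - α)) / (n : ℝ) ^ (1 - α)))
        atTop (nhds 1)) ∧
    (∀ i : ℕ → ℕ, ∀ c ∈ Set.Ico (0:ℝ) 1, (∀ n, i n ≤ n) →
      Tendsto (fun n : ℕ => (i n : ℝ) / n) atTop (nhds c) →
      Tendsto (fun n : ℕ => Pbar n (i n)) atTop (nhds (1 - c ^ (1 - α)))) := by
  simp only [hPbar]
  refine ⟨fun ε hε i hin hi => ?_, fun i c hc hin hic => ?_⟩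
  · have hD := tendsto_rpow_sub_rpow_atTop (p := 1 - α) (by linarith) (by linarith : 1 - ε < 1)
      tendsto_natCast_atTop_atTop (fun n => (i n).cast_nonneg) (.of_forall hi)
    refine (isEquivalent_iff_tendsto_one ?_).1
      (zipf_tail_isEquivalent hα0 hα1 (by linarith : 1 - ε < 1) hin (.of_forall hi))
    filter_upwards [hD.eventually_gt_atTop 0, eventually_gt_atTop 0] with n hDn hn
    exact div_ne_zero hDn.ne' (rpow_pos_of_pos (by exact_mod_cast hn) _).ne'
  · have hic' : ∀ᶠ n : ℕ in atTop, (i n : ℝ) ≤ (1 + c) / 2 * n := by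
      filter_upwards [hic.eventually (gt_mem_nhds (by linarith [hc.2] : c < (1 + c) / 2)),
        eventually_gt_atTop 0] with n hn hn0
      exact ((div_lt_iff₀ (by exact_mod_cast hn0)).1 hn).le
    exact (zipf_tail_isEquivalent hα0 hα1 (by linarith [hc.2]) hin hic').symm.tendsto_nhds
      (tendsto_rpow_sub_rpow_div_rpow (by linarith) hic)
end
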